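/- arXiv:math/0611332 — 4 statements merged into one kernel-verified Lean document; each statement's English description precedes it below -/
import Mathlib

section
/- For every positive integer n ≥ 2, the alternating binomial sum ∑_{k=2}^{n} C(n,k) (−1)^k / (k−1) equals 1 − n + n·H_{n−1}, where H_{n−1} = ∑_{j=1}^{n−1} 1/j is the (n−1)-st harmonic number. -/
open Finset

/-!
Shifting `k = j + 2`, the absorption identity `(j + 2) C(n, j + 2) = n C(n - 1, j + 1)` and the
partial fraction `1 / ((j + 1)(j + 2)) = 1 / (j + 1) - 1 / (j + 2)` split the sum into
`n ∑ (-1)^j C(n - 1, j + 1) / (j + 1)` minus a plain alternating binomial sum. The former is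
`n H_{n-1}` by the classical identity `H_m = ∑_{k=1}^m (-1)^(k+1) C(m, k) / k`, the latter is `n - 1`.
-/

section AlternatingSums

variable {K : Type*} [Field K] [CharZero K]

theorem sum_range_neg_one_pow_mul_choose_succ {R : Type*} [CommRing R] (n : ℕ) :
    ∑ k ∈ range (n + 1), (-1 : R) ^ k * (n + 1).choose (k + 1) = 1 := by
  have h := Int.alternating_sum_range_choose_of_ne n.succ_ne_zero
  rw [sum_range_succ'] at h
  simp only [pow_succ, mul_neg, mul_one, neg_mul, sum_neg_distrib, pow_zero,
    Nat.choose_zero_right, Nat.cast_one] at h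
  have h' : ∑ k ∈ range (n + 1), (-1 : ℤ) ^ k * (n + 1).choose (k + 1) = 1 := by linarith
  exact_mod_cast congrArg (Int.cast : ℤ → R) h'

theorem sum_range_choose_mul_neg_one_pow_div_succ (n : ℕ) :
    ∑ k ∈ range (n + 1), (n.choose k : K) * (-1) ^ k / (k + 1) = 1 / (n + 1) := by
  have absorb (k : ℕ) : (n.choose k : K) * (-1) ^ k / (k + 1)
      = (-1) ^ k * (n + 1).choose (k + 1) / (n + 1) := by
    have h : ((n + 1) * n.choose k : K) = (n + 1).choose (k + 1) * (k + 1) := by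
      exact_mod_cast Nat.add_one_mul_choose_eq n k
    field_simp
    linear_combination h
  rw [sum_congr rfl fun k _ => absorb k, ← sum_div,
    sum_range_neg_one_pow_mul_choose_succ (R := K) n]

theorem harmonic_eq_sum_range_choose_mul_neg_one_pow_div (n : ℕ) :
    (harmonic n : K) = ∑ k ∈ range n, ((n.choose (k + 1) : K) * (-1) ^ k / (k + 1)) := by
  induction n with
  | zero => simp
  | succ n ih =>
    have pascal : ∀ k ∈ range (n + 1), ((n + 1).choose (k + 1) : K) * (-1) ^ k / (k + 1)
        = (n.choose (k + 1) : K) * (-1) ^ k / (k + 1) + (n.choose k : K) * (-1) ^ k / (k + 1) := by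
      intro k _
      rw [Nat.choose_succ_succ', Nat.cast_add]
      ring
    rw [sum_congr rfl pascal, sum_add_distrib, sum_range_succ _ n, Nat.choose_succ_self,
      sum_range_choose_mul_neg_one_pow_div_succ, ← ih, harmonic_succ]
    push_cast
    ring

theorem sum_range_choose_add_two_mul_neg_one_pow_div (m : ℕ) :
    ∑ j ∈ range m, ((m + 1).choose (j + 2) : K) * (-1) ^ j / (j + 1) = (m + 1) * harmonic m - m := by
  have partialFraction (j : ℕ) : ((m + 1).choose (j + 2) : K) * (-1) ^ j / (j + 1)
      = (m + 1) * ((m.choose (j + 1) : K) * (-1) ^ j / (j + 1))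
        - (-1) ^ j * (m + 1).choose (j + 2) := by
    have h : ((m + 1) * m.choose (j + 1) : K) = (m + 1).choose (j + 2) * (j + 2) := by
      exact_mod_cast Nat.add_one_mul_choose_eq m (j + 1)
    field_simp
    linear_combination -h
  have tail : ∑ j ∈ range m, (-1 : K) ^ j * (m + 1).choose (j + 2) = m := by
    have h := sum_range_neg_one_pow_mul_choose_succ (R := K) m
    rw [sum_range_succ'] at h
    simp only [pow_succ, mul_neg, mul_one, neg_mul, sum_neg_distrib, pow_zero, zero_add,
      Nat.choose_one_right, Nat.cast_add, Nat.cast_one, one_mul] at h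
    linear_combination -h
  rw [sum_congr rfl fun j _ => partialFraction j, sum_sub_distrib, ← mul_sum,
    ← harmonic_eq_sum_range_choose_mul_neg_one_pow_div, tail]

end AlternatingSums

theorem stmt_0 (n : ℕ) (hn : 2 ≤ n) :
    ∑ k ∈ Finset.Icc 2 n, (n.choose k : ℝ) * (-1) ^ k / ((k : ℝ) - 1) =
      1 - (n : ℝ) + (n : ℝ) * ∑ j ∈ Finset.Icc 1 (n - 1), (1 : ℝ) / (j : ℝ) := by
  obtain ⟨m, rfl⟩ : ∃ m, n = m + 1 := ⟨n - 1, by omega⟩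
  have reindex : ∑ k ∈ Icc 2 (m + 1), ((m + 1).choose k : ℝ) * (-1) ^ k / ((k : ℝ) - 1)
      = ∑ j ∈ range m, ((m + 1).choose (j + 2) : ℝ) * (-1) ^ j / (j + 1) := by
    rw [← Ico_add_one_right_eq_Icc, sum_Ico_eq_sum_range, show m + 1 + 1 - 2 = m by omega]
    refine sum_congr rfl fun j _ => ?_
    rw [add_comm 2 j]
    push_cast
    ring
  have harmonic_cast : ∑ j ∈ Icc 1 (m + 1 - 1), (1 : ℝ) / j = harmonic m := by
    simp [harmonic_eq_sum_Icc]
  rw [reindex, harmonic_cast, sum_range_choose_add_two_mul_neg_one_pow_div]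
  push_cast
  ring
end

section
/- For every integer n ≥ 2, d_n := ∑_{k=2}^{n} C(n,k)(−1)^k/ζ(k) equals ∑_{ℓ≥1} μ(ℓ)[(1 − 1/ℓ)^n − 1 + n/ℓ], where μ is the Möbius function; the series converges absolutely. -/
/-! Expand `(1 - 1/ℓ)^n - 1 + n/ℓ` binomially: it is `∑_{k=2}^n C(n,k) (-1)^k ℓ^{-k}`.
Since `1/ζ(k) = ∑_ℓ μ(ℓ) ℓ^{-k}` converges absolutely for `k ≥ 2`, the finite sum over `k` and
the series over `ℓ` may be interchanged, which gives the identity together with summability. -/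

open Finset ArithmeticFunction
open scoped ArithmeticFunction.Moebius ArithmeticFunction.zeta LSeries.notation

theorem sum_Icc_two_choose_mul_neg_pow {R : Type*} [CommRing R] (n : ℕ) (x : R) :
    ∑ k ∈ Icc 2 n, (n.choose k : R) * (-x) ^ k = (1 - x) ^ n - 1 + n * x := by
  rcases n with _ | m
  · simp
  have hbinom :
      (1 - x) ^ (m + 1) = ∑ k ∈ range (m + 1 + 1), ((m + 1).choose k : R) * (-x) ^ k := by
    rw [sub_eq_neg_add, add_pow]
    exact sum_congr rfl fun k _ => by ring
  rw [hbinom, ← sum_range_add_sum_Ico _ (show 2 ≤ m + 1 + 1 by omega), Ico_add_one_right_eq_Icc]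
  simp only [sum_range_succ, sum_range_zero, Nat.choose_zero_right, Nat.choose_one_right]
  push_cast
  ring

theorem LSeriesHasSum_moebius {s : ℂ} (hs : 1 < s.re) :
    LSeriesHasSum ↗μ s (riemannZeta s)⁻¹ := by
  have hmul := LSeries_zeta_mul_Lseries_moebius hs
  rw [LSeries_zeta_eq_riemannZeta hs] at hmul
  rw [← eq_inv_of_mul_eq_one_right hmul]
  exact (LSeriesSummable_moebius_iff.mpr hs).LSeriesHasSum

theorem hasSum_moebius_succ_mul_inv_pow {k : ℕ} (hk : 2 ≤ k) :
    HasSum (fun ℓ : ℕ => (μ (ℓ + 1) : ℂ) * (1 / ((ℓ : ℂ) + 1)) ^ k) (riemannZeta k)⁻¹ := by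
  have h := LSeriesHasSum_moebius (s := k) (by rw [Complex.natCast_re]; exact_mod_cast hk)
  rw [LSeriesHasSum, ← hasSum_nat_add_iff' 1] at h
  simpa [LSeries.term_of_ne_zero, div_pow, div_eq_mul_inv] using h

theorem stmt_15_general (n : ℕ) :
    Summable (fun ℓ : ℕ =>
        ‖(ArithmeticFunction.moebius (ℓ + 1) : ℂ) *
          ((1 - 1 / ((ℓ : ℂ) + 1)) ^ n - 1 + (n : ℂ) / ((ℓ : ℂ) + 1))‖) ∧
      ∑ k ∈ Finset.Icc 2 n, (n.choose k : ℂ) * (-1) ^ k / riemannZeta (k : ℂ) =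
        ∑' ℓ : ℕ, (ArithmeticFunction.moebius (ℓ + 1) : ℂ) *
          ((1 - 1 / ((ℓ : ℂ) + 1)) ^ n - 1 + (n : ℂ) / ((ℓ : ℂ) + 1)) := by
  have hexpand : ∀ ℓ : ℕ, (μ (ℓ + 1) : ℂ) *
      ((1 - 1 / ((ℓ : ℂ) + 1)) ^ n - 1 + (n : ℂ) / ((ℓ : ℂ) + 1)) =
      ∑ k ∈ Icc 2 n, (n.choose k : ℂ) * (-1) ^ k * ((μ (ℓ + 1) : ℂ) * (1 / ((ℓ : ℂ) + 1)) ^ k) := by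
    intro ℓ
    rw [div_eq_mul_one_div (n : ℂ), ← sum_Icc_two_choose_mul_neg_pow, mul_sum]
    exact sum_congr rfl fun k _ => by rw [neg_pow]; ring
  have hsum : HasSum (fun ℓ : ℕ => (μ (ℓ + 1) : ℂ) *
      ((1 - 1 / ((ℓ : ℂ) + 1)) ^ n - 1 + (n : ℂ) / ((ℓ : ℂ) + 1)))
      (∑ k ∈ Icc 2 n, (n.choose k : ℂ) * (-1) ^ k / riemannZeta (k : ℂ)) := by
    simp_rw [hexpand, div_eq_mul_inv]
    exact hasSum_sum fun k hk => (hasSum_moebius_succ_mul_inv_pow (mem_Icc.mp hk).1).mul_left _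
  exact ⟨hsum.summable.norm, hsum.tsum_eq.symm⟩

theorem stmt_15 (n : ℕ) (hn : 2 ≤ n) :
    Summable (fun ℓ : ℕ =>
        ‖(ArithmeticFunction.moebius (ℓ + 1) : ℂ) *
          ((1 - 1 / ((ℓ : ℂ) + 1)) ^ n - 1 + (n : ℂ) / ((ℓ : ℂ) + 1))‖) ∧
      ∑ k ∈ Finset.Icc 2 n, (n.choose k : ℂ) * (-1) ^ k / riemannZeta (k : ℂ) =
        ∑' ℓ : ℕ, (ArithmeticFunction.moebius (ℓ + 1) : ℂ) *
          ((1 - 1 / ((ℓ : ℂ) + 1)) ^ n - 1 + (n : ℂ) / ((ℓ : ℂ) + 1)) :=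
  stmt_15_general n
end

section
/- The function D(x) = ∑_{ℓ≥1} μ(ℓ)[e^{−x/ℓ} − 1 + x/ℓ] is differentiable on (0,∞) with D'(x) = −∑_{ℓ≥1} (μ(ℓ)/ℓ)[e^{−x/ℓ} − 1], and D'(x) is bounded uniformly on (0,∞). -/
/-!
For `t ≥ 0` we have `|exp (-t) - 1| ≤ t` and `|exp (-t) - 1 + t| ≤ t ^ 2`, so near any `x > 0`
both series are dominated by `C / ℓ ^ 2` and may be differentiated termwise.
For the uniform bound, the weights `1 - exp (-x / ℓ)` are nonnegative, decreasing in `ℓ` and at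
most `1`, so Abel summation reduces it to the classical bound `|∑_{n ≤ N} μ(n) / n| ≤ 1`, which
follows from `∑_{n ≤ N} μ(n) ⌊N / n⌋ = 1`.
-/

open Finset ArithmeticFunction Real
open scoped ArithmeticFunction.Moebius

theorem Finset.norm_sum_range_smul_le_of_antitone {E : Type*} [SeminormedAddCommGroup E]
    [NormedSpace ℝ E] {b : ℕ → ℝ} {a : ℕ → E} {B : ℝ} (hb : Antitone b) (hb0 : ∀ i, 0 ≤ b i)
    (hA : ∀ n, ‖∑ i ∈ range n, a i‖ ≤ B) (N : ℕ) :
    ‖∑ i ∈ range N, b i • a i‖ ≤ B * b 0 := by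
  rw [sum_range_by_parts]
  have hlast : ‖b (N - 1) • ∑ i ∈ range N, a i‖ ≤ b (N - 1) * B := by
    rw [norm_smul, Real.norm_of_nonneg (hb0 _)]
    exact mul_le_mul_of_nonneg_left (hA N) (hb0 _)
  have hsteps : ‖∑ i ∈ range (N - 1), (b (i + 1) - b i) • ∑ j ∈ range (i + 1), a j‖
      ≤ ∑ i ∈ range (N - 1), (b i - b (i + 1)) * B := by
    refine (norm_sum_le _ _).trans (sum_le_sum fun i _ => ?_)
    rw [norm_smul, Real.norm_eq_abs, abs_sub_comm,
      abs_of_nonneg (sub_nonneg.2 (hb (Nat.le_succ i)))]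
    exact mul_le_mul_of_nonneg_left (hA _) (sub_nonneg.2 (hb (Nat.le_succ i)))
  rw [← sum_mul, sum_range_sub' b] at hsteps
  calc _ ≤ b (N - 1) * B + (b 0 - b (N - 1)) * B :=
        (norm_sub_le _ _).trans (add_le_add hlast hsteps)
    _ = B * b 0 := by ring

theorem sum_Ioc_moebius_mul_div_eq_one {N : ℕ} (hN : 0 < N) :
    ∑ n ∈ Ioc 0 N, (μ n : ℝ) * ((N / n : ℕ) : ℝ) = 1 := by
  have := sum_Ioc_mul_zeta_eq_sum (μ : ArithmeticFunction ℝ) N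
  rw [coe_moebius_mul_coe_zeta] at this
  simpa [one_apply, Nat.one_le_iff_ne_zero.2 hN.ne'] using this.symm

theorem abs_sum_Ioc_moebius_div_le_one (N : ℕ) : |∑ n ∈ Ioc 0 N, (μ n : ℝ) / n| ≤ 1 := by
  cases N with
  | zero => simp
  | succ M =>
  have hN : (0 : ℝ) < (M + 1 : ℕ) := by positivity
  have hsplit : ((M + 1 : ℕ) : ℝ) * ∑ n ∈ Ioc 0 (M + 1), (μ n : ℝ) / n
      = 1 + ∑ n ∈ Ioc 0 (M + 1), (μ n : ℝ) * (((M + 1) % n : ℕ) / n) := by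
    rw [← sum_Ioc_moebius_mul_div_eq_one (N := M + 1) (by positivity), mul_sum, ← sum_add_distrib]
    refine sum_congr rfl fun n hn => ?_
    have hn : (n : ℝ) ≠ 0 := by simp only [mem_Ioc] at hn; exact_mod_cast hn.1.ne'
    have := congrArg (Nat.cast (R := ℝ)) (Nat.div_add_mod (M + 1) n)
    push_cast at this ⊢
    field_simp
    linear_combination -(μ n : ℝ) * this
  have hrem : |∑ n ∈ Ioc 0 (M + 1), (μ n : ℝ) * (((M + 1) % n : ℕ) / n)| ≤ M := by
    rw [sum_Ioc_succ_top (Nat.zero_le M), Nat.mod_self, Nat.cast_zero, zero_div, mul_zero,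
      add_zero]
    refine (abs_sum_le_sum_abs _ _).trans ?_
    calc ∑ n ∈ Ioc 0 M, |(μ n : ℝ) * (((M + 1) % n : ℕ) / n)| ≤ ∑ n ∈ Ioc 0 M, (1 : ℝ) := by
          refine sum_le_sum fun n hn => ?_
          have hn : 0 < n := (mem_Ioc.1 hn).1
          rw [abs_mul, abs_of_nonneg (by positivity : (0 : ℝ) ≤ ((M + 1) % n : ℕ) / n)]
          refine mul_le_one₀ (by exact_mod_cast abs_moebius_le_one) (by positivity) ?_
          rw [div_le_one (by positivity)]
          exact_mod_cast (Nat.mod_lt _ hn).le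
      _ = M := by simp
  have : ((M + 1 : ℕ) : ℝ) * |∑ n ∈ Ioc 0 (M + 1), (μ n : ℝ) / n| ≤ (M + 1 : ℕ) * 1 := by
    rw [← abs_of_pos hN, ← abs_mul, hsplit, abs_of_pos hN]
    push_cast
    linarith [abs_add_le (1 : ℝ) (∑ n ∈ Ioc 0 (M + 1), (μ n : ℝ) * (((M + 1) % n : ℕ) / n))]
  exact le_of_mul_le_mul_left this (by positivity)

theorem abs_sum_range_moebius_succ_div_le_one (N : ℕ) :
    |∑ ℓ ∈ range N, (μ (ℓ + 1) : ℝ) / ((ℓ : ℝ) + 1)| ≤ 1 := by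
  convert abs_sum_Ioc_moebius_div_le_one N using 2
  rw [range_eq_Ico, ← Ico_add_one_add_one_eq_Ioc, ← sum_Ico_add']
  push_cast
  rfl

theorem abs_exp_neg_sub_one_le {t : ℝ} (ht : 0 ≤ t) : |exp (-t) - 1| ≤ t := by
  rw [abs_sub_comm, abs_of_nonneg (sub_nonneg.2 (exp_le_one_iff.2 (neg_nonpos.2 ht)))]
  linarith [one_sub_le_exp_neg t]

-- `exp (-t) - 1 + t ≤ t (1 - exp (-t))` is `1 + t ≤ exp t`
theorem abs_exp_neg_sub_one_add_le_sq {t : ℝ} (ht : 0 ≤ t) : |exp (-t) - 1 + t| ≤ t ^ 2 := by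
  have h₁ := one_sub_le_exp_neg t
  have h₂ := add_one_le_exp t
  have h₃ : exp (-t) * exp t = 1 := by rw [← exp_add, neg_add_cancel, exp_zero]
  rw [abs_of_nonneg (by linarith)]
  nlinarith [exp_pos (-t)]

theorem summable_div_nat_add_one_sq (c : ℝ) : Summable fun ℓ : ℕ => c / ((ℓ : ℝ) + 1) ^ 2 := by
  have : Summable fun ℓ : ℕ => 1 / ((ℓ : ℝ) + 1) ^ 2 := by
    exact_mod_cast (summable_nat_add_iff 1).mpr (Real.summable_one_div_nat_pow.mpr one_lt_two)
  exact (this.mul_left c).congr fun ℓ => mul_one_div _ _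

theorem abs_moebius_div_mul_exp_sub_one_le (ℓ : ℕ) {y : ℝ} (hy : 0 ≤ y) :
    |(μ (ℓ + 1) : ℝ) / ((ℓ : ℝ) + 1) * (exp (-y / ((ℓ : ℝ) + 1)) - 1)| ≤ y / ((ℓ : ℝ) + 1) ^ 2 := by
  have hs : 0 ≤ y / ((ℓ : ℝ) + 1) := by positivity
  calc _ = |(μ (ℓ + 1) : ℝ)| / ((ℓ : ℝ) + 1) * |exp (-(y / ((ℓ : ℝ) + 1))) - 1| := by
        rw [abs_mul, abs_div, abs_of_pos (by positivity : (0 : ℝ) < ℓ + 1), neg_div]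
    _ ≤ 1 / ((ℓ : ℝ) + 1) * (y / ((ℓ : ℝ) + 1)) := by
        gcongr
        · exact_mod_cast abs_moebius_le_one
        · exact abs_exp_neg_sub_one_le hs
    _ = y / ((ℓ : ℝ) + 1) ^ 2 := by field_simp

theorem abs_moebius_mul_exp_sub_one_add_le (ℓ : ℕ) {y : ℝ} (hy : 0 ≤ y) :
    |(μ (ℓ + 1) : ℝ) * (exp (-y / ((ℓ : ℝ) + 1)) - 1 + y / ((ℓ : ℝ) + 1))|
      ≤ y ^ 2 / ((ℓ : ℝ) + 1) ^ 2 := by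
  have hs : 0 ≤ y / ((ℓ : ℝ) + 1) := by positivity
  calc _ = |(μ (ℓ + 1) : ℝ)| * |exp (-(y / ((ℓ : ℝ) + 1))) - 1 + y / ((ℓ : ℝ) + 1)| := by
        rw [abs_mul, neg_div]
    _ ≤ 1 * (y / ((ℓ : ℝ) + 1)) ^ 2 := by
        gcongr
        · exact_mod_cast abs_moebius_le_one
        · exact abs_exp_neg_sub_one_add_le_sq hs
    _ = y ^ 2 / ((ℓ : ℝ) + 1) ^ 2 := by rw [one_mul, div_pow]

theorem hasDerivAt_moebius_mul_exp_sub_one_add (ℓ : ℕ) (y : ℝ) :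
    HasDerivAt (fun y : ℝ => (μ (ℓ + 1) : ℝ) *
        (exp (-y / ((ℓ : ℝ) + 1)) - 1 + y / ((ℓ : ℝ) + 1)))
      (-((μ (ℓ + 1) : ℝ) / ((ℓ : ℝ) + 1) * (exp (-y / ((ℓ : ℝ) + 1)) - 1))) y := by
  have h := ((((hasDerivAt_id' y).neg.div_const ((ℓ : ℝ) + 1)).exp.sub_const 1).add
    ((hasDerivAt_id' y).div_const ((ℓ : ℝ) + 1))).const_mul (μ (ℓ + 1) : ℝ)
  exact h.congr_deriv (by simp only [Pi.neg_apply]; field_simp; ring)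

theorem hasDerivAt_tsum_moebius_mul_exp_sub_one_add {x : ℝ} (hx : 0 < x) :
    HasDerivAt
      (fun y : ℝ => ∑' ℓ : ℕ, (μ (ℓ + 1) : ℝ) * (exp (-y / ((ℓ : ℝ) + 1)) - 1 + y / ((ℓ : ℝ) + 1)))
      (-∑' ℓ : ℕ, (μ (ℓ + 1) : ℝ) / ((ℓ : ℝ) + 1) * (exp (-x / ((ℓ : ℝ) + 1)) - 1)) x := by
  have hx_mem : x ∈ Set.Ioo 0 (2 * x) := ⟨hx, by linarith⟩
  rw [← tsum_neg]
  refine hasDerivAt_tsum_of_isPreconnected (summable_div_nat_add_one_sq (2 * x)) isOpen_Ioo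
    isPreconnected_Ioo (fun ℓ y _ => hasDerivAt_moebius_mul_exp_sub_one_add ℓ y)
    (fun ℓ y hy => ?_) hx_mem ?_ hx_mem
  · rw [norm_neg, Real.norm_eq_abs]
    exact (abs_moebius_div_mul_exp_sub_one_le ℓ hy.1.le).trans (by gcongr; exact hy.2.le)
  · exact .of_norm_bounded (summable_div_nat_add_one_sq (x ^ 2))
      fun ℓ => abs_moebius_mul_exp_sub_one_add_le ℓ hx.le

theorem abs_tsum_moebius_div_mul_exp_sub_one_le_one {x : ℝ} (hx : 0 < x) :
    |∑' ℓ : ℕ, (μ (ℓ + 1) : ℝ) / ((ℓ : ℝ) + 1) * (exp (-x / ((ℓ : ℝ) + 1)) - 1)| ≤ 1 := by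
  have hsum : Summable fun ℓ : ℕ =>
      (μ (ℓ + 1) : ℝ) / ((ℓ : ℝ) + 1) * (exp (-x / ((ℓ : ℝ) + 1)) - 1) :=
    .of_norm_bounded (summable_div_nat_add_one_sq x)
      fun ℓ => abs_moebius_div_mul_exp_sub_one_le ℓ hx.le
  set b : ℕ → ℝ := fun ℓ => 1 - exp (-x / ((ℓ : ℝ) + 1))
  have hb : Antitone b := fun i j hij => by
    simp only [b, neg_div]
    gcongr
  have hb0 : ∀ ℓ, 0 ≤ b ℓ := fun ℓ => by
    simp only [b, sub_nonneg, exp_le_one_iff, neg_div, neg_nonpos]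
    positivity
  have hpartial : ∀ N, |∑ ℓ ∈ range N, (μ (ℓ + 1) : ℝ) / ((ℓ : ℝ) + 1) *
      (exp (-x / ((ℓ : ℝ) + 1)) - 1)| ≤ 1 := fun N => by
    calc _ = ‖∑ ℓ ∈ range N, b ℓ • ((μ (ℓ + 1) : ℝ) / ((ℓ : ℝ) + 1))‖ := by
          rw [Real.norm_eq_abs, ← abs_neg, ← sum_neg_distrib]
          congr 1
          refine sum_congr rfl fun ℓ _ => ?_
          simp only [b, smul_eq_mul]
          ring
      _ ≤ 1 * b 0 := norm_sum_range_smul_le_of_antitone hb hb0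
          (fun n => (Real.norm_eq_abs _).trans_le (abs_sum_range_moebius_succ_div_le_one n)) N
      _ ≤ 1 := by simp only [b, one_mul, sub_le_self_iff]; exact (exp_pos _).le
  exact le_of_tendsto hsum.hasSum.tendsto_sum_nat.abs (.of_forall hpartial)

theorem stmt_17 :
    (∀ x : ℝ, 0 < x →
        HasDerivAt
          (fun y : ℝ => ∑' ℓ : ℕ, (ArithmeticFunction.moebius (ℓ + 1) : ℝ) *
            (Real.exp (-y / ((ℓ : ℝ) + 1)) - 1 + y / ((ℓ : ℝ) + 1)))
          (-∑' ℓ : ℕ, (ArithmeticFunction.moebius (ℓ + 1) : ℝ) / ((ℓ : ℝ) + 1) *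
            (Real.exp (-x / ((ℓ : ℝ) + 1)) - 1)) x) ∧
      ∃ M : ℝ, ∀ x : ℝ, 0 < x →
        |∑' ℓ : ℕ, (ArithmeticFunction.moebius (ℓ + 1) : ℝ) / ((ℓ : ℝ) + 1) *
          (Real.exp (-x / ((ℓ : ℝ) + 1)) - 1)| ≤ M :=
  ⟨fun _ hx => hasDerivAt_tsum_moebius_mul_exp_sub_one_add hx,
    1, fun _ hx => abs_tsum_moebius_div_mul_exp_sub_one_le_one hx⟩
end

section
/- For −2 < Re(s) < −1, ∫_0^∞ D(x) x^{s−1} dx = (∑_{ℓ≥1} μ(ℓ) ℓ^{s}) · Γ(s) = Γ(s)/ζ(−s), where D(x) = ∑_{ℓ≥1} μ(ℓ)[e^{−x/ℓ} − 1 + x/ℓ]. -/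
/-!
Put `φ(x) = e^{-x} - 1 + x`, so that `D(x) = ∑ μ(ℓ) φ(x/ℓ)`. For `-2 < Re s < -1` the Mellin
transform of `φ` is `Γ(s)` (Cauchy–Saalschütz): integrating by parts against `x^s / s` twice
lowers `φ` to `e^{-x} - 1` and then to `e^{-x}`, the subtracted Taylor terms being exactly what
kills the boundary terms, and `Γ(s + 2) / (s (s + 1)) = Γ(s)`. Rescaling turns this into
`ℓ^s Γ(s)` for the `ℓ`-th summand. As `|μ| ≤ 1` and `∑ ℓ^{Re s} < ∞`, the sum of the
`L¹`-norms of the summands converges, so the Mellin transform may be taken termwise, and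
`∑ μ(ℓ) ℓ^s = 1/ζ(-s)` is the Dirichlet series of `μ`.
-/

open MeasureTheory

noncomputable def Dfun (x : ℝ) : ℝ :=
  ∑' ℓ : ℕ, (ArithmeticFunction.moebius (ℓ + 1) : ℝ) *
    (Real.exp (-x / ((ℓ : ℝ) + 1)) - 1 + x / ((ℓ : ℝ) + 1))

open Real Set Filter Topology Asymptotics

section Mellin

variable {E : Type*} [NormedAddCommGroup E] [NormedSpace ℂ E]

theorem MellinConvergent.of_isBigO_rpow {f : ℝ → E} {s : ℂ} {a b : ℝ}
    (hf : ContinuousOn f (Ioi 0)) (hf_top : f =O[atTop] (· ^ a)) (ha : s.re + a < 0)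
    (hf_bot : f =O[𝓝[>] 0] (· ^ b)) (hb : 0 < s.re + b) : MellinConvergent f s :=
  mellinConvergent_of_isBigO_rpow (a := -a) (b := -b) (hf.locallyIntegrableOn measurableSet_Ioi)
    (by simpa using hf_top) (by linarith) (by simpa using hf_bot) (by linarith)

theorem mellin_comp_div (f : ℝ → E) (s : ℂ) {a : ℝ} (ha : 0 < a) :
    mellin (fun t => f (t / a)) s = (a : ℂ) ^ s • mellin f s := by
  simp_rw [div_eq_inv_mul, mellin_comp_mul_left f s (inv_pos.2 ha), Complex.ofReal_inv,
    Complex.inv_cpow _ _ (by rw [Complex.arg_ofReal_of_nonneg ha.le]; exact pi_ne_zero.symm),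
    Complex.cpow_neg, inv_inv]

theorem integral_norm_cpow_smul_comp_div (f : ℝ → E) (s : ℂ) {a : ℝ} (ha : 0 < a) :
    ∫ t : ℝ in Ioi 0, ‖(t : ℂ) ^ (s - 1) • f (t / a)‖ =
      a ^ s.re * ∫ t : ℝ in Ioi 0, ‖(t : ℂ) ^ (s - 1) • f t‖ := by
  have hscale : ∀ t ∈ Ioi (0 : ℝ), ‖(t : ℂ) ^ (s - 1) • f (t / a)‖ =
      a ^ (s.re - 1) * ‖((a⁻¹ * t : ℝ) : ℂ) ^ (s - 1) • f (a⁻¹ * t)‖ := fun t (ht : 0 < t) => by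
    rw [norm_smul, norm_smul, Complex.norm_cpow_eq_rpow_re_of_pos ht,
      Complex.norm_cpow_eq_rpow_re_of_pos (by positivity), Complex.sub_re, Complex.one_re,
      mul_rpow (by positivity) ht.le, inv_rpow ha.le, div_eq_inv_mul, mul_assoc,
      mul_inv_cancel_left₀ (by positivity)]
  rw [setIntegral_congr_fun measurableSet_Ioi hscale, integral_const_mul,
    integral_comp_mul_left_Ioi (fun t => ‖(t : ℂ) ^ (s - 1) • f t‖) 0 (inv_pos.2 ha),
    mul_zero, inv_inv, smul_eq_mul, ← mul_assoc, ← rpow_add_one ha.ne', sub_add_cancel]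

theorem mellin_tsum {ι : Type*} [Countable ι] {f : ι → ℝ → E} {s : ℂ}
    (hf : ∀ i, MellinConvergent (f i) s)
    (hsum : Summable fun i => ∫ t : ℝ in Ioi 0, ‖(t : ℂ) ^ (s - 1) • f i t‖) :
    mellin (fun t => ∑' i, f i t) s = ∑' i, mellin (f i) s := by
  simp_rw [mellin, ← tsum_const_smul'']
  exact (integral_tsum_of_summable_integral_norm hf hsum).symm

end Mellin

theorem mellin_tsum_mul_comp_div {f : ℝ → ℂ} {c : ℕ → ℂ} {s : ℂ} {C : ℝ}
    (hf : MellinConvergent f s) (hc : ∀ n, ‖c n‖ ≤ C) (hs : s.re < -1) :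
    mellin (fun t => ∑' n : ℕ, c n * f (t / ((n : ℝ) + 1))) s =
      (∑' n : ℕ, c n * ((n : ℂ) + 1) ^ s) * mellin f s := by
  have hconv (n : ℕ) : MellinConvergent (fun t => c n * f (t / ((n : ℝ) + 1))) s := by
    simpa only [div_eq_inv_mul, smul_eq_mul] using
      ((MellinConvergent.comp_mul_left (inv_pos.2 n.cast_add_one_pos)).2 hf).const_smul (c n)
  have hsum : Summable fun n : ℕ =>
      ∫ t : ℝ in Ioi 0, ‖(t : ℂ) ^ (s - 1) • (c n * f (t / ((n : ℝ) + 1)))‖ := by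
    have hpow : Summable fun n : ℕ => ((n : ℝ) + 1) ^ s.re := by
      simpa using (summable_nat_add_iff 1).2 (summable_nat_rpow.2 hs)
    simp_rw [← smul_eq_mul (a := c _), smul_comm ((_ : ℂ) ^ (s - 1)) (c _), norm_smul (c _),
      integral_const_mul, integral_norm_cpow_smul_comp_div f s (Nat.cast_add_one_pos _)]
    exact ((hpow.mul_right _).mul_left C).of_nonneg_of_le (fun n => by positivity)
      fun n => mul_le_mul_of_nonneg_right (hc n) (by positivity)
  rw [mellin_tsum hconv hsum, ← tsum_mul_right]
  refine tsum_congr fun n => ?_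
  simp_rw [← smul_eq_mul (a := c n), mellin_const_smul,
    mellin_comp_div f s n.cast_add_one_pos, smul_eq_mul]
  push_cast
  ring

theorem tendsto_cpow_mul_of_isBigO_rpow {l : Filter ℝ} {f : ℝ → ℂ} {s : ℂ} {b : ℝ}
    (hl : ∀ᶠ x in l, 0 < x) (hf : f =O[l] (· ^ b))
    (hlim : Tendsto (· ^ (s.re + b)) l (𝓝 0)) :
    Tendsto (fun x : ℝ => (x : ℂ) ^ s * f x) l (𝓝 0) := by
  have hcpow : (fun x : ℝ => (x : ℂ) ^ s) =O[l] (· ^ s.re) :=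
    IsBigO.of_bound 1 <| hl.mono fun x hx => by
      rw [one_mul, Complex.norm_cpow_eq_rpow_re_of_pos hx, norm_of_nonneg (by positivity)]
  refine ((hcpow.mul hf).congr' .rfl ?_).trans_tendsto hlim
  exact hl.mono fun x hx => (rpow_add hx _ _).symm

theorem mellin_eq_mellin_add_one_div_of_hasDerivAt_neg {f g : ℝ → ℂ} {s : ℂ} {a b : ℝ}
    (hs : s ≠ 0) (hf : ∀ x ∈ Ioi 0, HasDerivAt f (-g x) x)
    (hf_top : f =O[atTop] (· ^ a)) (ha : s.re + a < 0)
    (hf_bot : f =O[𝓝[>] 0] (· ^ b)) (hb : 0 < s.re + b)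
    (hg : MellinConvergent g (s + 1)) :
    mellin f s = mellin g (s + 1) / s := by
  have hv : ∀ x ∈ Ioi (0 : ℝ), HasDerivAt (fun x : ℝ => (x : ℂ) ^ s / s) ((x : ℂ) ^ (s - 1)) x :=
    fun x hx => by
      simpa using hasDerivAt_ofReal_cpow_const' (ne_of_gt hx)
        (by simpa [sub_eq_neg_self] using hs : s - 1 ≠ -1)
  have hlim : ∀ {l : Filter ℝ} {c : ℝ}, (∀ᶠ x in l, 0 < x) → f =O[l] (· ^ c) →
      Tendsto (· ^ (s.re + c)) l (𝓝 0) → Tendsto (f * fun x : ℝ => (x : ℂ) ^ s / s) l (𝓝 0) :=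
    fun hl hfc hc => by
      simpa [Pi.mul_def, mul_div_assoc', mul_comm] using
        (tendsto_cpow_mul_of_isBigO_rpow hl hfc hc).div_const s
  have hf_int : MellinConvergent f s := .of_isBigO_rpow
    (fun x hx => (hf x hx).continuousAt.continuousWithinAt) hf_top ha hf_bot hb
  have hparts := integral_Ioi_mul_deriv_eq_deriv_mul hf hv
    (by simpa [MellinConvergent, Pi.mul_def, mul_comm] using hf_int)
    (by simpa [MellinConvergent, Pi.mul_def, div_mul_eq_mul_div, mul_comm, mul_div_assoc] using
      (hg.div_const s).neg)
    (hlim self_mem_nhdsWithin hf_bot ?_) (hlim (eventually_gt_atTop 0) hf_top ?_)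
  · have hg_int : ∫ x in Ioi (0 : ℝ), -g x * ((x : ℂ) ^ s / s) = -(mellin g (s + 1) / s) := by
      simp_rw [mellin, add_sub_cancel_right, smul_eq_mul, ← integral_div, ← integral_neg]
      exact setIntegral_congr_fun measurableSet_Ioi fun x _ => by ring
    rw [hg_int, sub_zero, sub_neg_eq_add, zero_add] at hparts
    simpa [mellin, mul_comm] using hparts
  · have := tendsto_nhdsWithin_of_tendsto_nhds (s := Ioi 0)
      (continuousAt_rpow_const 0 _ (.inr hb.le)).tendsto
    rwa [zero_rpow hb.ne'] at this
  · simpa using tendsto_rpow_neg_atTop (neg_pos.2 ha)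

theorem isBigO_exp_neg_sub_one_atTop :
    (fun x : ℝ => ((rexp (-x) - 1 : ℝ) : ℂ)) =O[atTop] (· ^ (0 : ℝ)) :=
  IsBigO.of_bound 1 <| (eventually_ge_atTop 0).mono fun x hx => by
    have := add_one_le_exp (-x)
    rw [Complex.norm_real, rpow_zero, norm_one, one_mul, norm_eq_abs, abs_le]
    constructor <;> linarith [exp_pos (-x), exp_le_one_iff.2 (neg_nonpos.2 hx)]

theorem isBigO_exp_neg_sub_one_nhdsGT :
    (fun x : ℝ => ((rexp (-x) - 1 : ℝ) : ℂ)) =O[𝓝[>] 0] (· ^ (1 : ℝ)) := by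
  refine IsBigO.of_bound 2 ?_
  filter_upwards [Ioo_mem_nhdsGT one_pos] with x hx
  have := abs_exp_sub_one_le (x := -x) (by rw [abs_neg, abs_of_pos hx.1]; exact hx.2.le)
  rwa [Complex.norm_real, rpow_one, norm_eq_abs, norm_eq_abs, ← abs_neg x]

theorem isBigO_exp_neg_sub_one_add_atTop :
    (fun x : ℝ => ((rexp (-x) - 1 + x : ℝ) : ℂ)) =O[atTop] (· ^ (1 : ℝ)) :=
  IsBigO.of_bound 1 <| (eventually_ge_atTop 0).mono fun x hx => by
    have := add_one_le_exp (-x)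
    rw [Complex.norm_real, rpow_one, norm_eq_abs, norm_eq_abs, abs_of_nonneg hx, one_mul, abs_le]
    constructor <;> linarith [exp_le_one_iff.2 (neg_nonpos.2 hx)]

theorem isBigO_exp_neg_sub_one_add_nhdsGT :
    (fun x : ℝ => ((rexp (-x) - 1 + x : ℝ) : ℂ)) =O[𝓝[>] 0] (· ^ (2 : ℝ)) := by
  refine IsBigO.of_bound 1 ?_
  filter_upwards [Ioo_mem_nhdsGT one_pos] with x hx
  have := abs_exp_sub_one_sub_id_le (x := -x) (by rw [abs_neg, abs_of_pos hx.1]; exact hx.2.le)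
  rwa [Complex.norm_real, rpow_two, norm_eq_abs, norm_eq_abs, one_mul, abs_of_nonneg (sq_nonneg x),
    ← sub_neg_eq_add, ← neg_sq]

theorem mellin_exp_neg_sub_one {s : ℂ} (hs1 : -1 < s.re) (hs2 : s.re < 0) :
    mellin (fun x : ℝ => ((rexp (-x) - 1 : ℝ) : ℂ)) s = Complex.Gamma s := by
  have hs : s ≠ 0 := by rintro rfl; simp at hs2
  have hderiv : ∀ x ∈ Ioi (0 : ℝ),
      HasDerivAt (fun x : ℝ => ((rexp (-x) - 1 : ℝ) : ℂ)) (-((rexp (-x) : ℝ) : ℂ)) x :=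
    fun x _ => by simpa using ((hasDerivAt_neg x).exp.sub_const 1).ofReal_comp
  have hGamma : MellinConvergent (fun x : ℝ => ((rexp (-x) : ℝ) : ℂ)) (s + 1) := by
    simpa [MellinConvergent, mul_comm] using
      Complex.GammaIntegral_convergent (s := s + 1) (by simp; linarith)
  rw [mellin_eq_mellin_add_one_div_of_hasDerivAt_neg hs hderiv isBigO_exp_neg_sub_one_atTop
    (by simpa using hs2) isBigO_exp_neg_sub_one_nhdsGT (by linarith) hGamma,
    ← Complex.GammaIntegral_eq_mellin, ← Complex.Gamma_eq_integral (by simp; linarith),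
    Complex.Gamma_add_one s hs, mul_div_cancel_left₀ _ hs]

theorem mellin_exp_neg_sub_one_add {s : ℂ} (hs1 : -2 < s.re) (hs2 : s.re < -1) :
    mellin (fun x : ℝ => ((rexp (-x) - 1 + x : ℝ) : ℂ)) s = Complex.Gamma s := by
  have hs : s ≠ 0 := by rintro rfl; simp at hs2; linarith
  have hderiv : ∀ x ∈ Ioi (0 : ℝ), HasDerivAt (fun x : ℝ => ((rexp (-x) - 1 + x : ℝ) : ℂ))
      (-((rexp (-x) - 1 : ℝ) : ℂ)) x :=
    fun x _ => by
      simpa [neg_add_eq_sub] using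
        (((hasDerivAt_neg x).exp.sub_const 1).add (hasDerivAt_id x)).ofReal_comp
  have hconv : MellinConvergent (fun x : ℝ => ((rexp (-x) - 1 : ℝ) : ℂ)) (s + 1) :=
    .of_isBigO_rpow (by fun_prop) isBigO_exp_neg_sub_one_atTop (by simp; linarith)
      isBigO_exp_neg_sub_one_nhdsGT (by simp; linarith)
  rw [mellin_eq_mellin_add_one_div_of_hasDerivAt_neg hs hderiv isBigO_exp_neg_sub_one_add_atTop
    (by linarith) isBigO_exp_neg_sub_one_add_nhdsGT (by linarith) hconv,
    mellin_exp_neg_sub_one (by simp; linarith) (by simp; linarith),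
    Complex.Gamma_add_one s hs, mul_div_cancel_left₀ _ hs]

theorem tsum_moebius_mul_cpow_eq_inv_riemannZeta {s : ℂ} (hs : s.re < -1) :
    ∑' n : ℕ, (ArithmeticFunction.moebius (n + 1) : ℂ) * ((n : ℂ) + 1) ^ s =
      (riemannZeta (-s))⁻¹ := by
  have hs' : 1 < (-s).re := by simp; linarith
  rw [← LSeries_one_eq_riemannZeta hs',
    inv_eq_of_mul_eq_one_right (LSeries_one_mul_Lseries_moebius hs'), LSeries, (ArithmeticFunction.LSeriesSummable_moebius_iff.2 hs').tsum_eq_zero_add]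
  simp [LSeries.term_of_ne_zero, Complex.cpow_neg, div_eq_mul_inv]

theorem stmt_19 (s : ℂ) (hs1 : -2 < s.re) (hs2 : s.re < -1) :
    ∫ x : ℝ in Set.Ioi (0 : ℝ), (Dfun x : ℂ) * (x : ℂ) ^ (s - 1) =
        (∑' ℓ : ℕ, (ArithmeticFunction.moebius (ℓ + 1) : ℂ) * ((ℓ : ℂ) + 1) ^ s) *
          Complex.Gamma s ∧
      ∫ x : ℝ in Set.Ioi (0 : ℝ), (Dfun x : ℂ) * (x : ℂ) ^ (s - 1) =
        Complex.Gamma s / riemannZeta (-s) := by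
  set φ : ℝ → ℂ := fun x => ((rexp (-x) - 1 + x : ℝ) : ℂ)
  have hD : (fun x => (Dfun x : ℂ)) = fun x =>
      ∑' n : ℕ, (ArithmeticFunction.moebius (n + 1) : ℂ) * φ (x / ((n : ℝ) + 1)) := by
    ext x
    simp [Dfun, φ, Complex.ofReal_tsum, neg_div]
  have hμ (n : ℕ) : ‖(ArithmeticFunction.moebius (n + 1) : ℂ)‖ ≤ 1 := by
    simpa [← Int.cast_abs] using
      (Int.cast_le (R := ℝ)).2 (ArithmeticFunction.abs_moebius_le_one (n := n + 1))
  have hφ : MellinConvergent φ s := .of_isBigO_rpow (by fun_prop)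
    isBigO_exp_neg_sub_one_add_atTop (by linarith) isBigO_exp_neg_sub_one_add_nhdsGT (by linarith)
  have hmain : ∫ x : ℝ in Ioi 0, (Dfun x : ℂ) * (x : ℂ) ^ (s - 1) =
      (∑' n : ℕ, (ArithmeticFunction.moebius (n + 1) : ℂ) * ((n : ℂ) + 1) ^ s) *
        Complex.Gamma s := by
    simp_rw [mul_comm _ ((_ : ℂ) ^ (s - 1)), ← smul_eq_mul (a := (_ : ℂ) ^ (s - 1))]
    rw [← mellin, hD, mellin_tsum_mul_comp_div hφ hμ hs2, mellin_exp_neg_sub_one_add hs1 hs2]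
  refine ⟨hmain, ?_⟩
  rw [hmain, tsum_moebius_mul_cpow_eq_inv_riemannZeta hs2, inv_mul_eq_div]
end
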